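/- arXiv:2110.11950 — 3 statements merged into one kernel-verified Lean document; each statement's English description precedes it below -/
import Mathlib

section
/- For every nonnegative ε, the function g(σ) = E_{z∼N(0,1)}[Φ(ε + σz) - Φ(σz)] is nonincreasing in σ > 0, where Φ is the standard normal cumulative distribution function. -/
open MeasureTheory ProbabilityTheory

/-- Standard normal CDF. -/
noncomputable def stdPhi (t : ℝ) : ℝ :=
  ∫ u in Set.Iic t, Real.exp (-u ^ 2 / 2) / Real.sqrt (2 * Real.pi)

/-!
If `y, z` are independent standard normals, `E[Φ(a + σz)] = P(y - σz ≤ a)`, and `y - σz` is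
centred normal with variance `1 + σ²`; hence `g(σ) = Φ(ε / √(1 + σ²)) - Φ(0)`, which is
nonincreasing in `σ ≥ 0` because `Φ` is monotone and `ε ≥ 0`.
-/

open Set
open scoped NNReal

lemma stdPhi_eq_cdf_gaussianReal : stdPhi = cdf (gaussianReal 0 1) := by
  funext t
  rw [cdf_eq_real, measureReal_def, gaussianReal_apply_eq_integral _ one_ne_zero,
    ENNReal.toReal_ofReal (setIntegral_nonneg measurableSet_Iic
      fun u _ => gaussianPDFReal_nonneg 0 1 u)]
  simp [stdPhi, gaussianPDFReal, div_eq_inv_mul]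

lemma measurable_cdf (μ : Measure ℝ) : Measurable (cdf μ) :=
  (monotone_cdf μ).measurable

lemma integrable_cdf_comp {α : Type*} [MeasurableSpace α] (μ : Measure ℝ) (ν : Measure α)
    [IsFiniteMeasure ν] {f : α → ℝ} (hf : Measurable f) :
    Integrable (fun x => cdf μ (f x)) ν :=
  .of_bound ((measurable_cdf μ).comp hf).aestronglyMeasurable 1 <|
    .of_forall fun x => by
      rw [Real.norm_eq_abs, abs_le]
      exact ⟨by linarith [cdf_nonneg μ (f x)], cdf_le_one μ (f x)⟩

lemma cdf_conv (μ ν : Measure ℝ) [IsProbabilityMeasure μ] [IsProbabilityMeasure ν] (a : ℝ) :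
    cdf (μ ∗ ν) a = ∫ x, cdf ν (a - x) ∂μ := by
  rw [cdf_eq_real, ← integral_indicator_one measurableSet_Iic,
    integral_conv ((integrable_const 1).indicator measurableSet_Iic)]
  congr with x
  rw [cdf_eq_real, ← integral_indicator_one measurableSet_Iic]
  congr with y
  simp only [indicator, mem_Iic, le_sub_iff_add_le', Pi.one_apply]

lemma cdf_gaussianReal_zero_mean {v : ℝ≥0} (hv : v ≠ 0) (a : ℝ) :
    cdf (gaussianReal 0 v) a = cdf (gaussianReal 0 1) (a / √v) := by
  have hs : 0 < √(v : ℝ) := Real.sqrt_pos.2 (by positivity)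
  have hmap : (gaussianReal 0 1).map (√(v : ℝ) * ·) = gaussianReal 0 v := by
    rw [gaussianReal_map_const_mul, mul_zero, mul_one]
    congr 1
    ext
    simp
  rw [cdf_eq_real, cdf_eq_real, ← hmap, map_measureReal_apply (by fun_prop) measurableSet_Iic]
  congr 1
  ext z
  simp [le_div_iff₀' hs]

lemma integral_cdf_gaussianReal_add_mul (σ a : ℝ) :
    ∫ z, cdf (gaussianReal 0 1) (a + σ * z) ∂gaussianReal 0 1
      = cdf (gaussianReal 0 1) (a / √(1 + σ ^ 2)) := by
  have hmap : (gaussianReal 0 1).map (-σ * ·) = gaussianReal 0 (σ ^ 2).toNNReal := by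
    rw [gaussianReal_map_const_mul, mul_zero, mul_one]
    congr 1
    ext
    simp [sq_nonneg]
  calc ∫ z, cdf (gaussianReal 0 1) (a + σ * z) ∂gaussianReal 0 1
      = ∫ x, cdf (gaussianReal 0 1) (a - x) ∂gaussianReal 0 (σ ^ 2).toNNReal := by
        rw [← hmap, integral_map (f := fun x => cdf (gaussianReal 0 1) (a - x)) (by fun_prop)
          ((measurable_cdf _).comp (by fun_prop)).aestronglyMeasurable]
        simp [sub_eq_add_neg]
    _ = cdf (gaussianReal 0 ((σ ^ 2).toNNReal + 1)) a := by
        rw [← cdf_conv, gaussianReal_conv_gaussianReal, add_zero]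
    _ = cdf (gaussianReal 0 1) (a / √(1 + σ ^ 2)) := by
        rw [cdf_gaussianReal_zero_mean (by positivity), add_comm]
        simp [sq_nonneg]

/-- For every `ε ≥ 0`, `g(σ) = E_{z ∼ N(0,1)}[Φ(ε + σz) - Φ(σz)]` is nonincreasing
in `σ > 0`. -/
theorem gauss_smoothing_antitone (ε : ℝ) (hε : 0 ≤ ε) (σ₁ σ₂ : ℝ)
    (h₁ : 0 < σ₁) (h₂ : σ₁ ≤ σ₂) :
    (∫ z, (stdPhi (ε + σ₂ * z) - stdPhi (σ₂ * z)) ∂(gaussianReal 0 1)) ≤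
    (∫ z, (stdPhi (ε + σ₁ * z) - stdPhi (σ₁ * z)) ∂(gaussianReal 0 1)) := by
  have smoothed : ∀ σ : ℝ, (∫ z, (stdPhi (ε + σ * z) - stdPhi (σ * z)) ∂(gaussianReal 0 1))
      = cdf (gaussianReal 0 1) (ε / √(1 + σ ^ 2)) - cdf (gaussianReal 0 1) 0 := by
    intro σ
    rw [stdPhi_eq_cdf_gaussianReal, integral_sub (integrable_cdf_comp _ _ (by fun_prop))
      (integrable_cdf_comp _ _ (by fun_prop)), integral_cdf_gaussianReal_add_mul]
    simpa using integral_cdf_gaussianReal_add_mul σ 0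
  rw [smoothed, smoothed, sub_le_sub_iff_right]
  exact monotone_cdf _ (by gcongr)
end

section
/- Consider the Gaussian mixture model where y = ±1 with probabilities π and 1−π, and x = Wz with z ∼ N(yμ, I_k) for a full column rank W ∈ R^{d×k}. The boundary risk of the Bayes-optimal classifier h*(x) = sign(xᵀ(WWᵀ)†Wμ − q/2), with q = log((1−π)/π), under ℓ₂ perturbations of radius ε satisfies BR(h*) ≤ ε/(√(2π)·σ_min(W)). -/
/-!
The Bayes classifier tests the half-space `x ⬝ᵥ v ≥ c`. A perturbation of ℓ₂-size `ε` moves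
`x ⬝ᵥ v` by at most `ε ‖v‖`, so a correctly classified point can be pushed into an error only
if its margin lies in a band of width `ε ‖v‖` on the correct side of the threshold. For either
label the margin is `z ⬝ᵥ Wᵀv` plus a constant, with `z` standard Gaussian, hence a Gaussian of
standard deviation `‖Wᵀv‖ ≥ σ_min ‖v‖` (as `v` lies in the column space of `W`), whose density
never exceeds `1 / (√(2π) ‖Wᵀv‖)`.
-/

open MeasureTheory ProbabilityTheory Matrix

/-- Euclidean norm on ℝ^n. -/
noncomputable def l2Norm {n : ℕ} (u : Fin n → ℝ) : ℝ := Real.sqrt (∑ i, u i ^ 2)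

lemma l2Norm_nonneg {n : ℕ} (u : Fin n → ℝ) : 0 ≤ l2Norm u := Real.sqrt_nonneg _

lemma l2Norm_eq_norm_toLp {n : ℕ} (u : Fin n → ℝ) :
    l2Norm u = ‖(WithLp.toLp 2 u : EuclideanSpace ℝ (Fin n))‖ := by
  simp [l2Norm, EuclideanSpace.norm_eq]

lemma dotProduct_eq_inner_toLp {n : ℕ} (a b : Fin n → ℝ) :
    a ⬝ᵥ b = inner ℝ (WithLp.toLp 2 a : EuclideanSpace ℝ (Fin n)) (WithLp.toLp 2 b) := by
  simp [EuclideanSpace.inner_eq_star_dotProduct, dotProduct_comm]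

lemma abs_dotProduct_le_l2Norm_mul {n : ℕ} (a b : Fin n → ℝ) :
    |a ⬝ᵥ b| ≤ l2Norm a * l2Norm b := by
  simpa only [dotProduct_eq_inner_toLp, l2Norm_eq_norm_toLp] using abs_real_inner_le_norm _ _

lemma l2Norm_sq {n : ℕ} (a : Fin n → ℝ) : l2Norm a ^ 2 = a ⬝ᵥ a := by
  rw [dotProduct_eq_inner_toLp, l2Norm_eq_norm_toLp, real_inner_self_eq_norm_sq]

lemma mul_l2Norm_le_l2Norm_transpose_mulVec {d k : ℕ} {W : Matrix (Fin d) (Fin k) ℝ} {σ : ℝ}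
    (hσ : 0 ≤ σ) (hσW : ∀ u, σ * l2Norm u ≤ l2Norm (W *ᵥ u)) {v : Fin d → ℝ}
    (hv : ∃ w, v = W *ᵥ w) : σ * l2Norm v ≤ l2Norm (Wᵀ *ᵥ v) := by
  obtain ⟨w, rfl⟩ := hv
  have hsq : l2Norm (W *ᵥ w) ^ 2 = w ⬝ᵥ (Wᵀ *ᵥ (W *ᵥ w)) := by
    rw [l2Norm_sq, mulVec_transpose, dotProduct_mulVec, dotProduct_comm]
  have hcs := (le_abs_self _).trans (abs_dotProduct_le_l2Norm_mul w (Wᵀ *ᵥ (W *ᵥ w)))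
  rcases (l2Norm_nonneg (W *ᵥ w)).eq_or_lt with h0 | hpos
  · rw [← h0, mul_zero]; exact l2Norm_nonneg _
  refine le_of_mul_le_mul_right ?_ hpos
  calc σ * l2Norm (W *ᵥ w) * l2Norm (W *ᵥ w)
      ≤ σ * (l2Norm w * l2Norm (Wᵀ *ᵥ (W *ᵥ w))) := by
        rw [mul_assoc, ← sq, hsq]; exact mul_le_mul_of_nonneg_left hcs hσ
    _ ≤ l2Norm (Wᵀ *ᵥ (W *ᵥ w)) * l2Norm (W *ᵥ w) := by
        rw [← mul_assoc, mul_comm]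
        exact mul_le_mul_of_nonneg_left (hσW w) (l2Norm_nonneg _)

lemma map_dotProduct_pi_gaussianReal {ι : Type*} [Fintype ι] (u : ι → ℝ) :
    (Measure.pi fun _ : ι => gaussianReal 0 1).map (· ⬝ᵥ u) =
      gaussianReal 0 (∑ i, u i ^ 2).toNNReal := by
  set L : StrongDual ℝ (EuclideanSpace ℝ ι) := innerSL ℝ (WithLp.toLp 2 u)
  have hL : (· ⬝ᵥ u) = L ∘ WithLp.toLp 2 := by
    ext z; simp [L, EuclideanSpace.inner_eq_star_dotProduct, dotProduct_comm]
  rw [hL, ← Measure.map_map L.continuous.measurable (by fun_prop), map_pi_eq_stdGaussian,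
    IsGaussian.map_eq_gaussianReal, integral_strongDual_stdGaussian, variance_dual_stdGaussian,
    innerSL_apply_norm, EuclideanSpace.real_norm_sq_eq]

lemma gaussianReal_le_mul_volume (m : ℝ) {v : NNReal} (hv : v ≠ 0) (s : Set ℝ) :
    gaussianReal m v s ≤ ENNReal.ofReal (Real.sqrt (2 * Real.pi * v))⁻¹ * volume s := by
  rw [gaussianReal_apply m hv, ← setLIntegral_const]
  refine setLIntegral_mono measurable_const fun x _ => ENNReal.ofReal_le_ofReal ?_
  rw [gaussianPDFReal_def]
  refine mul_le_of_le_one_right (by positivity) (Real.exp_le_one_iff.mpr ?_)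
  exact div_nonpos_of_nonpos_of_nonneg (neg_nonpos.mpr (sq_nonneg _)) (by positivity)

lemma gaussianReal_Ico_le (m : ℝ) {v : NNReal} (hv : v ≠ 0) (a b : ℝ) :
    gaussianReal m v (Set.Ico a b) ≤ ENNReal.ofReal ((b - a) / Real.sqrt (2 * Real.pi * v)) := by
  refine (gaussianReal_le_mul_volume m hv _).trans_eq ?_
  rw [Real.volume_Ico, ← ENNReal.ofReal_mul (by positivity), div_eq_mul_inv, mul_comm]

lemma pi_gaussianReal_preimage_dotProduct_Ico_le {k : ℕ} {u : Fin k → ℝ} (hu : 0 < l2Norm u)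
    (a L : ℝ) :
    (Measure.pi fun _ : Fin k => gaussianReal 0 1) ((· ⬝ᵥ u) ⁻¹' Set.Ico a (a + L)) ≤
      ENNReal.ofReal (L / (Real.sqrt (2 * Real.pi) * l2Norm u)) := by
  have hvar : ∑ i, u i ^ 2 = l2Norm u ^ 2 := by rw [l2Norm, Real.sq_sqrt (by positivity)]
  rw [← Measure.map_apply (by fun_prop) measurableSet_Ico, map_dotProduct_pi_gaussianReal, hvar]
  refine (gaussianReal_Ico_le 0 (by positivity) a (a + L)).trans_eq ?_
  rw [add_sub_cancel_left, Real.coe_toNNReal _ (by positivity), Real.sqrt_mul (by positivity),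
    Real.sqrt_sq hu.le]

noncomputable def thresholdClassifier {d : ℕ} (v : Fin d → ℝ) (c : ℝ) (x : Fin d → ℝ) : ℝ :=
  if 0 ≤ x ⬝ᵥ v - c then 1 else -1

def marginBand {d : ℕ} (v : Fin d → ℝ) (c L : ℝ) : Set ((Fin d → ℝ) × ℝ) :=
  {p | 0 < p.2 ∧ p.1 ⬝ᵥ v - c ∈ Set.Ico 0 L ∨ p.2 < 0 ∧ p.1 ⬝ᵥ v - c ∈ Set.Ico (-L) 0}

lemma measurableSet_marginBand {d : ℕ} (v : Fin d → ℝ) (c L : ℝ) :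
    MeasurableSet (marginBand v c L) := by
  unfold marginBand
  measurability

lemma adversarial_subset_union_marginBand {d : ℕ} (v : Fin d → ℝ) (c ε : ℝ) :
    {p : (Fin d → ℝ) × ℝ | ∃ x', l2Norm (x' - p.1) ≤ ε ∧ thresholdClassifier v c x' * p.2 ≤ 0} ⊆
      {p | thresholdClassifier v c p.1 * p.2 ≤ 0} ∪ marginBand v c (ε * l2Norm v) := by
  rintro ⟨x, y⟩ ⟨x', hx', herr⟩
  have hshift : |(x' ⬝ᵥ v - c) - (x ⬝ᵥ v - c)| ≤ ε * l2Norm v := by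
    rw [sub_sub_sub_cancel_right, ← sub_dotProduct]
    exact (abs_dotProduct_le_l2Norm_mul _ _).trans
      (mul_le_mul_of_nonneg_right hx' (l2Norm_nonneg v))
  rw [abs_le] at hshift
  simp only [thresholdClassifier, marginBand, Set.mem_union, Set.mem_ofPred_eq,
    Set.mem_Ico] at herr ⊢
  split_ifs at herr ⊢ <;> grind

lemma preimage_marginBand_subset {d k : ℕ} (W : Matrix (Fin d) (Fin k) ℝ) (m : Fin k → ℝ)
    {y : ℝ} (hy : y ≠ 0) (v : Fin d → ℝ) (c L : ℝ) :
    ∃ a, (fun z => (W *ᵥ (m + z), y)) ⁻¹' marginBand v c L ⊆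
      (· ⬝ᵥ Wᵀ *ᵥ v) ⁻¹' Set.Ico a (a + L) := by
  have hmargin : ∀ z, (W *ᵥ (m + z)) ⬝ᵥ v - c = z ⬝ᵥ Wᵀ *ᵥ v + (m ⬝ᵥ Wᵀ *ᵥ v - c) := by
    intro z
    rw [dotProduct_comm, dotProduct_mulVec, ← mulVec_transpose, dotProduct_comm, add_dotProduct]
    ring
  rcases hy.lt_or_gt with hneg | hpos
  · refine ⟨c - m ⬝ᵥ Wᵀ *ᵥ v - L, fun z hz => ?_⟩
    simp only [marginBand, Set.mem_preimage, Set.mem_ofPred_eq, Set.mem_Ico, hmargin] at hz ⊢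
    constructor <;> grind
  · refine ⟨c - m ⬝ᵥ Wᵀ *ᵥ v, fun z hz => ?_⟩
    simp only [marginBand, Set.mem_preimage, Set.mem_ofPred_eq, Set.mem_Ico, hmargin] at hz ⊢
    constructor <;> grind

lemma map_pi_gaussianReal_marginBand_le {d k : ℕ} {W : Matrix (Fin d) (Fin k) ℝ} {σ ε : ℝ}
    (hσ : 0 < σ) (hσW : ∀ u, σ * l2Norm u ≤ l2Norm (W *ᵥ u)) {v : Fin d → ℝ}
    (hv : ∃ w, v = W *ᵥ w) (hε : 0 ≤ ε) (m : Fin k → ℝ) {y : ℝ} (hy : y ≠ 0) (c : ℝ) :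
    ((Measure.pi fun _ : Fin k => gaussianReal 0 1).map fun z => (W *ᵥ (m + z), y))
        (marginBand v c (ε * l2Norm v)) ≤
      ENNReal.ofReal (ε / (Real.sqrt (2 * Real.pi) * σ)) := by
  obtain ⟨a, ha⟩ := preimage_marginBand_subset W m hy v c (ε * l2Norm v)
  rw [Measure.map_apply (by fun_prop) (measurableSet_marginBand _ _ _)]
  refine (measure_mono ha).trans ?_
  rcases (l2Norm_nonneg v).eq_or_lt with hv0 | hvpos
  · simp [← hv0]
  have hu := mul_l2Norm_le_l2Norm_transpose_mulVec hσ.le hσW hv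
  have hupos : 0 < l2Norm (Wᵀ *ᵥ v) := (mul_pos hσ hvpos).trans_le hu
  refine (pi_gaussianReal_preimage_dotProduct_Ico_le hupos a _).trans
    (ENNReal.ofReal_le_ofReal ?_)
  rw [div_le_div_iff₀ (by positivity) (by positivity)]
  calc ε * l2Norm v * (Real.sqrt (2 * Real.pi) * σ)
      = ε * Real.sqrt (2 * Real.pi) * (σ * l2Norm v) := by ring
    _ ≤ ε * Real.sqrt (2 * Real.pi) * l2Norm (Wᵀ *ᵥ v) := by gcongr
    _ = ε * (Real.sqrt (2 * Real.pi) * l2Norm (Wᵀ *ᵥ v)) := by ring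

theorem gmm_boundary_risk_bound_general {d k : ℕ} (W : Matrix (Fin d) (Fin k) ℝ)
    (μ : Fin k → ℝ) (π' : ℝ) (hπ : π' ∈ Set.Ioo (0:ℝ) 1)
    (σmin : ℝ) (hσ : 0 < σmin)
    (hσW : ∀ u : Fin k → ℝ, σmin * l2Norm u ≤ l2Norm (W.mulVec u))
    -- `v = (WWᵀ)† Wμ`, characterized by `(WWᵀ)v = Wμ` and `v ∈ col(W)`:
    (v : Fin d → ℝ)
    (hvcol : ∃ w : Fin k → ℝ, v = W.mulVec w)
    (ε : ℝ) (hε : 0 ≤ ε)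
    (P : Measure ((Fin d → ℝ) × ℝ))
    (hP : P = (ENNReal.ofReal π') •
        ((Measure.pi fun _ : Fin k => gaussianReal 0 1).map
          (fun z => (W.mulVec (μ + z), (1:ℝ)))) +
      (ENNReal.ofReal (1 - π')) •
        ((Measure.pi fun _ : Fin k => gaussianReal 0 1).map
          (fun z => (W.mulVec (-μ + z), (-1:ℝ)))))
    (hstar : (Fin d → ℝ) → ℝ)
    (hhstar : hstar = fun x =>
      if 0 ≤ x ⬝ᵥ v - Real.log ((1 - π') / π') / 2 then 1 else -1) :
    P {p | ∃ x', l2Norm (x' - p.1) ≤ ε ∧ hstar x' * p.2 ≤ 0} -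
      P {p | hstar p.1 * p.2 ≤ 0} ≤
    ENNReal.ofReal (ε / (Real.sqrt (2 * Real.pi) * σmin)) := by
  set c := Real.log ((1 - π') / π') / 2
  set R := ENNReal.ofReal (ε / (Real.sqrt (2 * Real.pi) * σmin))
  have hband (m : Fin k → ℝ) {y : ℝ} (hy : y ≠ 0) :=
    map_pi_gaussianReal_marginBand_le hσ hσW hvcol hε m hy c
  subst hhstar
  calc _ ≤ P (marginBand v c (ε * l2Norm v)) := tsub_le_iff_left.mpr <|
        (measure_mono (adversarial_subset_union_marginBand v c ε)).trans (measure_union_le _ _)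
    _ ≤ ENNReal.ofReal π' * R + ENNReal.ofReal (1 - π') * R := by
        rw [hP, Measure.add_apply, Measure.smul_apply, Measure.smul_apply, smul_eq_mul,
          smul_eq_mul]
        gcongr
        exacts [hband μ one_ne_zero, hband (-μ) (by norm_num)]
    _ = R := by
        rw [← add_mul, ← ENNReal.ofReal_add hπ.1.le (by linarith [hπ.2]), add_sub_cancel,
          ENNReal.ofReal_one, one_mul]

/-- Gaussian mixture model with low-dimensional latent structure: `y = ±1` with
probabilities `π, 1-π`, and `x = Wz`, `z ∼ N(yμ, I_k)`. The boundary risk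
(adversarial minus standard risk, for ℓ₂ perturbations of radius `ε`) of the
Bayes-optimal classifier `sign(xᵀ(WWᵀ)†Wμ - q/2)` is at most
`ε/(√(2π) σ_min(W))`. -/
theorem gmm_boundary_risk_bound {d k : ℕ} (W : Matrix (Fin d) (Fin k) ℝ)
    (μ : Fin k → ℝ) (π' : ℝ) (hπ : π' ∈ Set.Ioo (0:ℝ) 1)
    (σmin : ℝ) (hσ : 0 < σmin)
    (hσW : ∀ u : Fin k → ℝ, σmin * l2Norm u ≤ l2Norm (W.mulVec u))
    -- `v = (WWᵀ)† Wμ`, characterized by `(WWᵀ)v = Wμ` and `v ∈ col(W)`: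
    (v : Fin d → ℝ) (hv : (W * Wᵀ).mulVec v = W.mulVec μ)
    (hvcol : ∃ w : Fin k → ℝ, v = W.mulVec w)
    (ε : ℝ) (hε : 0 ≤ ε)
    (P : Measure ((Fin d → ℝ) × ℝ))
    (hP : P = (ENNReal.ofReal π') •
        ((Measure.pi fun _ : Fin k => gaussianReal 0 1).map
          (fun z => (W.mulVec (μ + z), (1:ℝ)))) +
      (ENNReal.ofReal (1 - π')) •
        ((Measure.pi fun _ : Fin k => gaussianReal 0 1).map
          (fun z => (W.mulVec (-μ + z), (-1:ℝ)))))
    (hstar : (Fin d → ℝ) → ℝ)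
    (hhstar : hstar = fun x =>
      if 0 ≤ x ⬝ᵥ v - Real.log ((1 - π') / π') / 2 then 1 else -1) :
    P {p | ∃ x', l2Norm (x' - p.1) ≤ ε ∧ hstar x' * p.2 ≤ 0} -
      P {p | hstar p.1 * p.2 ≤ 0} ≤
    ENNReal.ofReal (ε / (Real.sqrt (2 * Real.pi) * σmin)) :=
  gmm_boundary_risk_bound_general W μ π' hπ σmin hσ hσW v hvcol ε hε P hP hstar hhstar
end

section
/- Let ℓ : R → R≥0 be strictly decreasing, and consider the robust empirical risk R_n(θ) = (1/n) Σᵢ ℓ(yᵢxᵢᵀθ − ε‖θ‖₂) with ε > 0, where each xᵢ lies in the column space of a matrix W ∈ R^{d×k}. Then any minimizer θ̂ of R_n over R^d satisfies P_{Ker(Wᵀ)}(θ̂) = 0, i.e., θ̂ lies in the column space of W. -/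
open Matrix

/-!
Split `θ` orthogonally along a subspace `K` containing the data (here the column space of `W`). The margins `⟪xᵢ, θ⟫` only
see the component in `K`, while dropping the component in `Kᗮ` strictly shrinks `‖θ‖` unless it
is zero. Hence the orthogonal projection of any `θ ∉ K` has strictly larger robust margins, so
(as `ℓ` is strictly decreasing) strictly smaller robust risk, and a minimizer must lie in `K`.
-/

open WithLp (toLp ofLp)
open scoped RealInnerProductSpace

namespace Submodule

variable {E : Type*} [NormedAddCommGroup E] [InnerProductSpace ℝ E]
  (K : Submodule ℝ E) [K.HasOrthogonalProjection]

theorem inner_starProjection_right_of_mem {x : E} (hx : x ∈ K) (θ : E) :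
    ⟪x, K.starProjection θ⟫ = ⟪x, θ⟫ := by
  rw [← inner_starProjection_left_eq_right, K.starProjection_eq_self_iff.mpr hx]

theorem norm_starProjection_lt_of_notMem {θ : E} (hθ : θ ∉ K) :
    ‖K.starProjection θ‖ < ‖θ‖ :=
  (K.norm_starProjection_apply_le θ).lt_of_ne fun h ↦ hθ ((K.mem_iff_norm_starProjection θ).mpr h)

end Submodule

section RobustRisk

variable {ι E : Type*} [Fintype ι] [NormedAddCommGroup E] [InnerProductSpace ℝ E]

noncomputable def robustRisk (ℓ : ℝ → ℝ) (ε : ℝ) (x : ι → E) (y : ι → ℝ) (θ : E) : ℝ :=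
  ∑ i, ℓ (y i * ⟪x i, θ⟫ - ε * ‖θ‖)

variable [Nonempty ι] {ℓ : ℝ → ℝ} {ε : ℝ} {K : Submodule ℝ E} [K.HasOrthogonalProjection]
  {x : ι → E}

theorem robustRisk_starProjection_lt (hℓ : StrictAnti ℓ) (hε : 0 < ε) (hx : ∀ i, x i ∈ K)
    (y : ι → ℝ) {θ : E} (hθ : θ ∉ K) :
    robustRisk ℓ ε x y (K.starProjection θ) < robustRisk ℓ ε x y θ := by
  refine Finset.sum_lt_sum_of_nonempty Finset.univ_nonempty fun i _ ↦ hℓ ?_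
  rw [K.inner_starProjection_right_of_mem (hx i)]
  gcongr
  exact K.norm_starProjection_lt_of_notMem hθ

theorem mem_of_forall_robustRisk_le (hℓ : StrictAnti ℓ) (hε : 0 < ε) (hx : ∀ i, x i ∈ K)
    (y : ι → ℝ) {θ : E} (hmin : ∀ θ', robustRisk ℓ ε x y θ ≤ robustRisk ℓ ε x y θ') :
    θ ∈ K := by
  by_contra hθ
  exact (robustRisk_starProjection_lt hℓ hε hx y hθ).not_ge (hmin _)

end RobustRisk

theorem l2Norm_eq_norm_toLp_s17 {m : ℕ} (u : Fin m → ℝ) : l2Norm u = ‖toLp 2 u‖ := by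
  simp [l2Norm, EuclideanSpace.norm_eq]

theorem robustRisk_toLp {ι : Type*} [Fintype ι] {m : ℕ} (ℓ : ℝ → ℝ) (ε : ℝ)
    (x : ι → Fin m → ℝ) (y : ι → ℝ) (θ : Fin m → ℝ) :
    robustRisk ℓ ε (fun i ↦ toLp 2 (x i)) y (toLp 2 θ) =
      ∑ i, ℓ (y i * (x i ⬝ᵥ θ) - ε * l2Norm θ) := by
  simp [robustRisk, EuclideanSpace.inner_toLp_toLp, dotProduct_comm, l2Norm_eq_norm_toLp_s17]

theorem robust_erm_in_column_space_general {d k n : ℕ} (hn : 0 < n)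
    (W : Matrix (Fin d) (Fin k) ℝ) (z : Fin n → Fin k → ℝ) (y : Fin n → ℝ)
    (ℓ : ℝ → ℝ) (hℓ : StrictAnti ℓ)
    (ε : ℝ) (hε : 0 < ε) (θhat : Fin d → ℝ)
    (hmin : ∀ θ : Fin d → ℝ,
      (1 / n : ℝ) * ∑ i, ℓ (y i * ((W.mulVec (z i)) ⬝ᵥ θhat) - ε * l2Norm θhat) ≤
      (1 / n : ℝ) * ∑ i, ℓ (y i * ((W.mulVec (z i)) ⬝ᵥ θ) - ε * l2Norm θ)) :
    ∃ α : Fin k → ℝ, θhat = W.mulVec α := by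
  have : Nonempty (Fin n) := Fin.pos_iff_nonempty.mp hn
  have hx : ∀ i, toLp 2 (W *ᵥ z i) ∈ LinearMap.range (toLpLin 2 2 W) :=
    fun i ↦ ⟨toLp 2 (z i), rfl⟩
  have hθhat : toLp 2 θhat ∈ LinearMap.range (toLpLin 2 2 W) := by
    refine mem_of_forall_robustRisk_le hℓ hε hx y fun θ ↦ ?_
    rw [robustRisk_toLp, ← WithLp.toLp_ofLp (x := θ), robustRisk_toLp]
    exact le_of_mul_le_mul_left (hmin (ofLp θ)) (by positivity)
  obtain ⟨α, hα⟩ := hθhat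
  exact ⟨ofLp α, congrArg ofLp hα.symm⟩

/-- Any minimizer of the robust empirical risk
`R_n(θ) = (1/n) Σ ℓ(yᵢ xᵢᵀθ - ε‖θ‖₂)` over data lying in the column space of `W`
itself lies in the column space of `W` (its projection onto `Ker(Wᵀ)` vanishes). -/
theorem robust_erm_in_column_space {d k n : ℕ} (hn : 0 < n)
    (W : Matrix (Fin d) (Fin k) ℝ) (z : Fin n → Fin k → ℝ) (y : Fin n → ℝ)
    (hy : ∀ i, y i = 1 ∨ y i = -1)
    (ℓ : ℝ → ℝ) (hℓpos : ∀ t, 0 ≤ ℓ t) (hℓ : StrictAnti ℓ)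
    (ε : ℝ) (hε : 0 < ε) (θhat : Fin d → ℝ)
    (hmin : ∀ θ : Fin d → ℝ,
      (1 / n : ℝ) * ∑ i, ℓ (y i * ((W.mulVec (z i)) ⬝ᵥ θhat) - ε * l2Norm θhat) ≤
      (1 / n : ℝ) * ∑ i, ℓ (y i * ((W.mulVec (z i)) ⬝ᵥ θ) - ε * l2Norm θ)) :
    ∃ α : Fin k → ℝ, θhat = W.mulVec α :=
  robust_erm_in_column_space_general hn W z y ℓ hℓ ε hε θhat hmin
end
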